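/- For all n ≥ r ≥ 3, for every (r+1)-coloring of the edges of the complete r-uniform hypergraph K_n^r, there exists a monochromatic component of order at least rn/(r+1). -/

import Mathlib

open Finset

/-- Two vertices are connected by the edge set `E` (of a hypergraph)
if they are joined by a walk of edges from `E`. -/
def connBy {V : Type*} (E : Set (Finset V)) : V → V → Prop :=
  Relation.ReflTransGen (fun u w => ∃ e ∈ E, u ∈ e ∧ w ∈ e)

/-- The connected component of `v` in the hypergraph with edge set `E`. -/
def compOf {V : Type*} (E : Set (Finset V)) (v : V) : Set V :=
  {u | connBy E u v}

/-!
Colour components are the classes of `r + 1` equivalence relations on the vertices, and any `r`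
vertices lie in one edge, hence in one class. Suppose every class misses more than `n / (r + 1)`
vertices. Then `z` is separated from `x` by at most two colours: otherwise `z`, together with one
vertex outside the `c`-class of `x` for each remaining colour `c`, would be at most `r - 1`
vertices sharing no class with `x`. The sets `D(x, z)` of separating colours satisfy
`D(x, y) ∆ D(x, z) ⊆ D(y, z)`, and since there are at least four colours this forces all
two-element sets `D(x, z)` to share a colour `g(x)`. The complements of the classes of `x` in the
other `r` colours are then disjoint, so fewer than `n / (r + 1)` vertices lie in all of those
classes. But all vertices with the same `g` do, and the `r + 1` fibres of `g` cover the vertices.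
-/

open scoped symmDiff

theorem Finset.eq_or_eq_or_eq_of_card_le_two {α : Type*} {s : Finset α} (hs : #s ≤ 2)
    {a b c : α} (ha : a ∈ s) (hb : b ∈ s) (hc : c ∈ s) : a = b ∨ a = c ∨ b = c := by
  by_contra! h
  exact hs.not_gt (two_lt_card.2 ⟨a, ha, b, hb, c, hc, h⟩)

theorem Finset.mem_or_mem_of_card_symmDiff_le_two {α : Type*} [DecidableEq α]
    {s t : Finset α} (hs : #s ≤ 2) (hst : #(s ∆ t) ≤ 2) {a b d : α} (ha : a ∈ s) (hb : b ∈ s)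
    (hab : a ≠ b) (hd : d ∈ t) (hda : d ≠ a) (hdb : d ≠ b) : a ∈ t ∨ b ∈ t := by
  by_contra! h
  have hds : d ∉ s := fun hds => by
    rcases eq_or_eq_or_eq_of_card_le_two hs ha hb hds with h' | h' | h' <;> simp_all
  exact hst.not_gt <| two_lt_card.2 ⟨a, by simp [mem_symmDiff, *], b, by simp [mem_symmDiff, *],
    d, by simp [mem_symmDiff, *], hab, hda.symm, hdb.symm⟩

theorem false_of_triangle_of_card_symmDiff_le_two {ι α : Type*} [Fintype α]
    [DecidableEq α] {F : ι → Finset α} (hcard : ∀ i, #(F i) ≤ 2)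
    (hsymmDiff : ∀ i j, #(F i ∆ F j) ≤ 2) (hcover : ∀ a, ∃ i, a ∈ F i)
    (hα : 4 ≤ Fintype.card α) {a b e : α} (hab : a ≠ b) (hea : e ≠ a) (heb : e ≠ b) {i j k : ι}
    (hai : a ∈ F i) (hbi : b ∈ F i) (hbj : b ∈ F j) (hej : e ∈ F j) (hak : a ∈ F k)
    (hek : e ∈ F k) : False := by
  have meet {i j a b d} :=
    mem_or_mem_of_card_symmDiff_le_two (hcard i) (hsymmDiff i j) (a := a) (b := b) (d := d)
  obtain ⟨d, -, hd⟩ := exists_mem_notMem_of_card_lt_card (s := {a, b, e}) (t := univ)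
    (by rw [card_univ]; exact card_le_three.trans_lt (by omega))
  simp only [mem_insert, mem_singleton, not_or] at hd
  obtain ⟨hda, hdb, hde⟩ := hd
  obtain ⟨l, hdl⟩ := hcover d
  -- `F l` contains `d` and at most one further point, which would have to lie in each of
  -- `{a, b}`, `{b, e}` and `{a, e}`
  have hl {x y} (hx : x ∈ F l) (hy : y ∈ F l) (hxd : x ≠ d) (hyd : y ≠ d) : x = y := by
    rcases eq_or_eq_or_eq_of_card_le_two (hcard l) hx hy hdl with h | h | h <;> simp_all
  rcases meet hai hbi hab hdl hda hdb with h₁ | h₁ <;>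
  rcases meet hbj hej heb.symm hdl hdb hde with h₂ | h₂ <;>
  rcases meet hak hek hea.symm hdl hda hde with h₃ | h₃ <;>
  first
  | exact hab (hl (x := a) (y := b) ‹_› ‹_› (Ne.symm hda) (Ne.symm hdb))
  | exact hea (hl (x := e) (y := a) ‹_› ‹_› (Ne.symm hde) (Ne.symm hda))
  | exact heb (hl (x := e) (y := b) ‹_› ‹_› (Ne.symm hde) (Ne.symm hdb))

theorem exists_forall_eq_of_card_symmDiff_le_two {ι α : Type*} [Fintype α] [DecidableEq α]
    (F : ι → Finset α) (hcard : ∀ i, #(F i) ≤ 2) (hsymmDiff : ∀ i j, #(F i ∆ F j) ≤ 2)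
    (hcover : ∀ a, ∃ i, a ∈ F i) (hα : 4 ≤ Fintype.card α) :
    ∃ g, ∀ i, ∀ a ∈ F i, ∀ b ∈ F i, a ≠ g → b ≠ g → a = b := by
  by_cases hpair : ∃ i, ∃ a ∈ F i, ∃ b ∈ F i, a ≠ b
  swap
  · push Not at hpair
    have : Nonempty α := Fintype.card_pos_iff.1 (by omega)
    exact ⟨Classical.arbitrary α, fun i a ha b hb _ _ => hpair i a ha b hb⟩
  obtain ⟨i, a, ha, b, hb, hab⟩ := hpair
  by_contra! hno
  have meet {i j a b d} :=
    mem_or_mem_of_card_symmDiff_le_two (hcard i) (hsymmDiff i j) (a := a) (b := b) (d := d)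
  -- a two-element set avoiding `a` exists by `hno a`, and it meets `{a, b}`, so it is `{b, e}`
  have avoid {a b} (ha : a ∈ F i) (hb : b ∈ F i) (hab : a ≠ b) :
      ∃ j e, b ∈ F j ∧ e ∈ F j ∧ a ∉ F j ∧ e ≠ a ∧ e ≠ b := by
    obtain ⟨j, c, hc, c', hc', hca, hc'a, hcc'⟩ := hno a
    have ha' : a ∉ F j := fun ha' => by
      rcases eq_or_eq_or_eq_of_card_le_two (hcard j) hc hc' ha' with h | h | h <;> simp_all
    by_cases hcb : c = b
    · exact ⟨j, c', hcb ▸ hc, hc', ha', hc'a, hcb ▸ hcc'.symm⟩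
    by_cases hc'b : c' = b
    · exact ⟨j, c, hc'b ▸ hc', hc, ha', hca, hc'b ▸ hcc'⟩
    have hbj := (meet ha hb hab hc hca hcb).resolve_left ha'
    rcases eq_or_eq_or_eq_of_card_le_two (hcard j) hc hc' hbj with h | h | h <;> simp_all
  obtain ⟨j, e, hbj, hej, -, hea, heb⟩ := avoid ha hb hab
  obtain ⟨k, -, hak, -, hbk, -, -⟩ := avoid hb ha hab.symm
  have hek : e ∈ F k := (meet hbj hej heb.symm hak hab hea.symm).resolve_left hbk
  exact false_of_triangle_of_card_symmDiff_le_two hcard hsymmDiff hcover hα hab hea heb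
    ha hb hbj hej hak hek

section Setoids

open scoped Classical

variable {V κ : Type*} (s : κ → Setoid V)

noncomputable def sepColors [Fintype κ] (x y : V) : Finset κ := {c | ¬ s c x y}

def IsCenter [Fintype κ] (x : V) (g : κ) : Prop :=
  ∀ z, ∀ c ∈ sepColors s x z, ∀ c' ∈ sepColors s x z, c ≠ g → c' ≠ g → c = c'

def CoversSmallSets (r : ℕ) : Prop :=
  ∀ T : Finset V, #T ≤ r → ∃ c, ∀ y ∈ T, ∀ z ∈ T, s c y z

def HasSmallClasses [Fintype V] (r : ℕ) : Prop :=
  ∀ c x, Fintype.card V < (r + 1) * #{y | ¬ s c x y}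

variable {s}

theorem mem_sepColors [Fintype κ] {x y : V} {c : κ} : c ∈ sepColors s x y ↔ ¬ s c x y := by
  simp [sepColors]

theorem sepColors_symmDiff_subset [Fintype κ] (x y z : V) :
    sepColors s x y ∆ sepColors s x z ⊆ sepColors s y z := by
  intro c hc
  simp only [mem_symmDiff, mem_sepColors, not_not] at hc ⊢
  rcases hc with ⟨hxy, hxz⟩ | ⟨hxz, hxy⟩
  · exact fun hyz => hxy ((s c).trans' hxz ((s c).symm' hyz))
  · exact fun hyz => hxz ((s c).trans' hxy hyz)

theorem le_card_of_forall_exists_not_rel {r : ℕ} (hcover : CoversSmallSets s r) (x : V)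
    (Z : Finset V) (hZ : ∀ c, ∃ z ∈ Z, ¬ s c x z) : r ≤ #Z := by
  by_contra! h
  obtain ⟨c, hc⟩ := hcover (insert x Z) ((card_insert_le x Z).trans h)
  obtain ⟨z, hz, hxz⟩ := hZ c
  exact hxz (hc x (mem_insert_self x Z) z (mem_insert_of_mem hz))

theorem exists_not_rel [Fintype V] {r : ℕ} (hsmall : HasSmallClasses s r)
    (c : κ) (x : V) : ∃ z, ¬ s c x z := by
  by_contra! h
  simpa [h] using hsmall c x

theorem card_sepColors_le_two [Fintype V] [Fintype κ] {r : ℕ} (hκ : Fintype.card κ = r + 1)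
    (hcover : CoversSmallSets s r) (hsmall : HasSmallClasses s r) (x z : V) :
    #(sepColors s x z) ≤ 2 := by
  choose w hw using exists_not_rel hsmall
  have hZ := le_card_of_forall_exists_not_rel hcover x
    (insert z ((sepColors s x z)ᶜ.image (w · x))) fun c => by
      by_cases hc : c ∈ sepColors s x z
      · exact ⟨z, mem_insert_self _ _, mem_sepColors.1 hc⟩
      · exact ⟨w c x, mem_insert_of_mem (mem_image_of_mem _ (mem_compl.2 hc)), hw c x⟩
  have hle : #(insert z ((sepColors s x z)ᶜ.image (w · x))) ≤ #(sepColors s x z)ᶜ + 1 :=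
    (card_insert_le _ _).trans (Nat.add_le_add_right card_image_le 1)
  have := card_le_univ (sepColors s x z)
  rw [card_compl, hκ] at hle
  omega

theorem exists_isCenter [Fintype V] [Fintype κ] {r : ℕ} (hr : 3 ≤ r)
    (hκ : Fintype.card κ = r + 1) (hcover : CoversSmallSets s r) (hsmall : HasSmallClasses s r)
    (x : V) : ∃ g, IsCenter s x g :=
  exists_forall_eq_of_card_symmDiff_le_two (sepColors s x)
    (card_sepColors_le_two hκ hcover hsmall x)
    (fun y z => (card_le_card (sepColors_symmDiff_subset x y z)).trans
      (card_sepColors_le_two hκ hcover hsmall y z))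
    (fun c => (exists_not_rel hsmall c x).imp fun _ => mem_sepColors.2) (by omega)

theorem IsCenter.rel_of_isCenter [Fintype V] [Fintype κ] {r : ℕ} (hr : 3 ≤ r)
    (hκ : Fintype.card κ = r + 1) (hcover : CoversSmallSets s r) (hsmall : HasSmallClasses s r)
    {x x' : V} {g : κ} (hx : IsCenter s x g) (hx' : IsCenter s x' g) {c : κ} (hcg : c ≠ g) :
    s c x x' := by
  by_contra hc
  -- a colour `d ≠ g` whose class contains both `x` and `x'`: a point `z` outside that class is
  -- then forced into the `c`-classes of both
  obtain ⟨d, -, hd⟩ := exists_mem_notMem_of_card_lt_card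
    (s := insert g (sepColors s x x')) (t := univ) (by
      have := card_sepColors_le_two hκ hcover hsmall x x'
      rw [card_univ, hκ]
      exact (card_insert_le _ _).trans_lt (by omega))
  rw [mem_insert, not_or, mem_sepColors, not_not] at hd
  obtain ⟨hdg, hd⟩ := hd
  have hdc : d ≠ c := by rintro rfl; exact hc hd
  obtain ⟨z, hz⟩ := exists_not_rel hsmall d x
  have hz' : ¬ s d x' z := fun h => hz ((s d).trans' hd h)
  have hxz : s c x z := by
    by_contra h
    exact hdc (hx z d (mem_sepColors.2 hz) c (mem_sepColors.2 h) hdg hcg)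
  have hx'z : s c x' z := by
    by_contra h
    exact hdc (hx' z d (mem_sepColors.2 hz') c (mem_sepColors.2 h) hdg hcg)
  exact hc ((s c).trans' hxz ((s c).symm' hx'z))

theorem IsCenter.card_lt [Fintype V] [Fintype κ] {r : ℕ} (hr : 0 < r)
    (hκ : Fintype.card κ = r + 1) (hsmall : HasSmallClasses s r) {x : V} {g : κ}
    (hx : IsCenter s x g) : (r + 1) * #{y | ∀ c ≠ g, s c x y} < Fintype.card V := by
  set G : Finset V := {y | ∀ c ≠ g, s c x y}
  have hGc : Gᶜ = (univ.erase g).biUnion fun c => {y | ¬ s c x y} := by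
    ext y; simp [G]
  have hdisj : #Gᶜ = ∑ c ∈ univ.erase g, #{y | ¬ s c x y} := by
    rw [hGc]
    refine card_biUnion fun c hc c' hc' hcc' => disjoint_left.2 fun z hz hz' => hcc' ?_
    simp only [mem_filter, mem_univ, true_and] at hz hz'
    exact hx z c (mem_sepColors.2 hz) c' (mem_sepColors.2 hz') (ne_of_mem_erase hc)
      (ne_of_mem_erase hc')
  have hsum : r * Fintype.card V < (r + 1) * #Gᶜ := by
    have hcard : #(univ.erase g) = r := by
      rw [card_erase_of_mem (mem_univ g), card_univ, hκ, Nat.add_sub_cancel]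
    have := sum_lt_sum_of_nonempty (s := univ.erase g) (f := fun _ => Fintype.card V)
      (by rw [← card_pos, hcard]; omega) fun c _ => hsmall c x
    rwa [sum_const, hcard, smul_eq_mul, ← mul_sum, ← hdisj] at this
  have := card_add_card_compl G
  nlinarith

variable (s) in
theorem exists_large_class [Fintype V] [Nonempty V] [Fintype κ] {r : ℕ} (hr : 3 ≤ r)
    (hκ : Fintype.card κ = r + 1) (hcover : CoversSmallSets s r) :
    ∃ c x, r * Fintype.card V ≤ (r + 1) * {y | s c x y}.ncard := by
  by_contra! hlarge
  have hsmall : HasSmallClasses s r := fun c x => by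
    have hc := hlarge c x
    rw [Set.ncard_eq_toFinset_card', Set.toFinset_ofPred] at hc
    have hsplit := card_filter_add_card_filter_not (s := univ) (p := fun y => s c x y)
    rw [card_univ] at hsplit
    nlinarith
  choose g hg using exists_isCenter hr hκ hcover hsmall
  have : Nonempty κ := Fintype.card_pos_iff.1 (by omega)
  obtain ⟨γ, hγ⟩ := Fintype.exists_le_card_fiber_of_nsmul_le_card g
    (b := (Fintype.card V : ℚ) / (r + 1)) (by rw [nsmul_eq_mul, hκ]; field_simp; simp)
  have hV : (0 : ℚ) < Fintype.card V := by exact_mod_cast Fintype.card_pos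
  obtain ⟨x, hx⟩ : ({x | g x = γ} : Finset V).Nonempty := by
    rw [← card_pos, ← Nat.cast_pos (α := ℚ)]
    exact (div_pos hV (by positivity)).trans_le hγ
  obtain ⟨-, rfl⟩ := mem_filter.1 hx
  have hfiber : #({x' | g x' = g x} : Finset V) ≤ #({y | ∀ c ≠ g x, s c x y} : Finset V) := by
    refine card_le_card fun x' hx' => mem_filter.2 ⟨mem_univ _, fun c hc => ?_⟩
    exact (hg x).rel_of_isCenter hr hκ hcover hsmall ((mem_filter.1 hx').2 ▸ hg x') hc
  have hlt : ((r : ℚ) + 1) * #({x' | g x' = g x} : Finset V) < Fintype.card V := by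
    exact_mod_cast (Nat.mul_le_mul_left _ hfiber).trans_lt ((hg x).card_lt (by omega) hκ hsmall)
  rw [div_le_iff₀ (by positivity)] at hγ
  linarith

end Setoids

theorem connBy_symm {V : Type*} {E : Set (Finset V)} {u v : V} (h : connBy E u v) :
    connBy E v u := by
  induction h with
  | refl => exact .refl
  | tail _ hstep ih =>
    obtain ⟨e, he, hb, hc⟩ := hstep
    exact .head ⟨e, he, hc, hb⟩ ih

def connSetoid {V : Type*} (E : Set (Finset V)) : Setoid V where
  r := connBy E
  iseqv := ⟨fun _ => .refl, connBy_symm, .trans⟩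

theorem coversSmallSets_connSetoid {V κ : Type*} [Fintype V] {r : ℕ} (hr : r ≤ Fintype.card V)
    (χ : Finset V → κ) : CoversSmallSets (fun c => connSetoid {e | #e = r ∧ χ e = c}) r := by
  intro T hT
  obtain ⟨e, hTe, he⟩ := exists_superset_card_eq hT hr
  exact ⟨χ e, fun y hy z hz => .single ⟨e, ⟨he, rfl⟩, hTe hy, hTe hz⟩⟩

theorem stmt2 (n r : ℕ) (hr : 3 ≤ r) (hn : r ≤ n) (χ : Finset (Fin n) → Fin (r + 1)) :
    ∃ (c : Fin (r + 1)) (v : Fin n),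
      (r : ℚ) * n / (r + 1) ≤ (compOf {e | e.card = r ∧ χ e = c} v).ncard := by
  have : Nonempty (Fin n) := ⟨⟨0, by omega⟩⟩
  obtain ⟨c, v, hcv⟩ := exists_large_class _ hr (Fintype.card_fin _)
    (coversSmallSets_connSetoid (by simpa using hn) χ)
  refine ⟨c, v, ?_⟩
  have hcomp :
      compOf {e | #e = r ∧ χ e = c} v = {y | connSetoid {e | #e = r ∧ χ e = c} v y} :=
    Set.ext fun _ => ⟨connBy_symm, connBy_symm⟩
  rw [Fintype.card_fin] at hcv
  rw [hcomp, div_le_iff₀' (by positivity)]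
  exact_mod_cast hcv
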